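/- arXiv:2009.00045 — 14 statements merged into one kernel-verified Lean document; each statement's English description precedes it below -/
import Mathlib

section
/- Let V be a vector space over a field K and let A, B, C, D : V → V be linear maps. The linear map Y : V × V → V × V defined by Y(x,y) = (Ax + By, Cx + Dy) satisfies the Yang–Baxter equation Y¹² ∘ Y¹³ ∘ Y²³ = Y²³ ∘ Y¹³ ∘ Y¹² if and only if the following relations hold in End(V): C² = C − DCA, B² = B − ABD, DC − CD = DCB, AB − BA = ABC, CA − AC = BCA, BD − DB = CBD, and DA − AD = BCB − CBC. -/
/-- For a map `Y : V × V → V × V`, the map `Y¹²` acting on the first two factors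
of `V × V × V`. -/
def yb12 {V : Type*} (Y : V × V → V × V) : V × V × V → V × V × V :=
  fun p => ((Y (p.1, p.2.1)).1, (Y (p.1, p.2.1)).2, p.2.2)

/-- For a map `Y : V × V → V × V`, the map `Y¹³` acting on the first and third factors
of `V × V × V`. -/
def yb13 {V : Type*} (Y : V × V → V × V) : V × V × V → V × V × V :=
  fun p => ((Y (p.1, p.2.2)).1, p.2.1, (Y (p.1, p.2.2)).2)

/-- For a map `Y : V × V → V × V`, the map `Y²³` acting on the last two factors
of `V × V × V`. -/
def yb23 {V : Type*} (Y : V × V → V × V) : V × V × V → V × V × V :=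
  fun p => (p.1, (Y (p.2.1, p.2.2)).1, (Y (p.2.1, p.2.2)).2)

/-- `Y` is a Yang–Baxter map: `Y¹² ∘ Y¹³ ∘ Y²³ = Y²³ ∘ Y¹³ ∘ Y¹²`. -/
def IsYB {V : Type*} (Y : V × V → V × V) : Prop :=
  yb12 Y ∘ yb13 Y ∘ yb23 Y = yb23 Y ∘ yb13 Y ∘ yb12 Y

/-- A parametric family `Y a b` satisfies the parametric Yang–Baxter equation:
`Y¹²_{a,b} ∘ Y¹³_{a,c} ∘ Y²³_{b,c} = Y²³_{b,c} ∘ Y¹³_{a,c} ∘ Y¹²_{a,b}` for all `a b c`. -/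
def IsParamYB {V Ω : Type*} (Y : Ω → Ω → V × V → V × V) : Prop :=
  ∀ a b c : Ω, yb12 (Y a b) ∘ yb13 (Y a c) ∘ yb23 (Y b c)
             = yb23 (Y b c) ∘ yb13 (Y a c) ∘ yb12 (Y a b)

theorem stmt0 {K V : Type*} [Field K] [AddCommGroup V] [Module K V]
    (A B C D : Module.End K V) :
    IsYB (fun p : V × V => (A p.1 + B p.2, C p.1 + D p.2)) ↔
      (C * C = C - D * C * A ∧ B * B = B - A * B * D ∧
       D * C - C * D = D * C * B ∧ A * B - B * A = A * B * C ∧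
       C * A - A * C = B * C * A ∧ B * D - D * B = C * B * D ∧
       D * A - A * D = B * C * B - C * B * C) := by
  constructor
  · intro h
    have hx : ∀ v : V, _ := fun v => congrFun h (v, 0, 0)
    have hy : ∀ v : V, _ := fun v => congrFun h ((0:V), v, 0)
    have hz : ∀ v : V, _ := fun v => congrFun h ((0:V), (0:V), v)
    simp only [yb12, yb13, yb23, Function.comp, map_add, map_zero, add_zero, zero_add,
      Prod.mk.injEq] at hx hy hz
    refine ⟨?_, ?_, ?_, ?_, ?_, ?_, ?_⟩ <;> ext v <;>
      simp only [Module.End.mul_apply, LinearMap.sub_apply]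
    · rw [eq_sub_iff_add_eq]; exact ((hx v).2.2).symm
    · rw [eq_sub_iff_add_eq, add_comm]; exact (hz v).1
    · have := (hy v).2.2
      rw [sub_eq_iff_eq_add, this]; abel
    · rw [sub_eq_iff_eq_add]; exact ((hy v).1).symm
    · rw [sub_eq_iff_eq_add']; exact (hx v).2.1
    · rw [sub_eq_iff_eq_add]; exact ((hz v).2.1).symm
    · have := (hy v).2.1
      rw [sub_eq_sub_iff_add_eq_add, add_comm, this, add_comm]
  · rintro ⟨hC, hB, hDC, hAB, hCA, hBD, hDA⟩
    have hC' : ∀ v : V, C (C v) = C v - D (C (A v)) := fun v =>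
      congrArg (fun f : Module.End K V => f v) hC
    have hB' : ∀ v : V, B (B v) = B v - A (B (D v)) := fun v =>
      congrArg (fun f : Module.End K V => f v) hB
    have hDC' : ∀ v : V, D (C v) = C (D v) + D (C (B v)) := fun v => by
      have : D (C v) - C (D v) = D (C (B v)) :=
        congrArg (fun f : Module.End K V => f v) hDC
      rw [sub_eq_iff_eq_add] at this; rw [this]; abel
    have hAB' : ∀ v : V, A (B (C v)) = A (B v) - B (A v) := fun v =>
      (congrArg (fun f : Module.End K V => f v) hAB).symm
    have hCA' : ∀ v : V, C (A v) = A (C v) + B (C (A v)) := fun v =>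
      sub_eq_iff_eq_add'.mp (congrArg (fun f : Module.End K V => f v) hCA)
    have hBD' : ∀ v : V, D (B v) = B (D v) - C (B (D v)) := fun v => by
      have : B (D v) - D (B v) = C (B (D v)) :=
        congrArg (fun f : Module.End K V => f v) hBD
      rw [eq_sub_iff_add_eq, ← this]; abel
    have hDA' : ∀ v : V, D (A v) = A (D v) + B (C (B v)) - C (B (C v)) := fun v => by
      have : D (A v) - A (D v) = B (C (B v)) - C (B (C v)) :=
        congrArg (fun f : Module.End K V => f v) hDA
      rw [sub_eq_iff_eq_add] at this; rw [this]; abel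
    funext p
    obtain ⟨x, y, z⟩ := p
    simp only [yb12, yb13, yb23, Function.comp, map_add, Prod.mk.injEq]
    refine ⟨?_, ?_, ?_⟩
    · rw [hB' z, hAB' y]; abel
    · generalize hw : B (C (A x)) = w
      rw [hDA' y, hBD' z, hCA' x, hw]; abel
    · rw [hC' x, hDC' y]; abel
end

section
/- Let V be a vector space over a field K and let A, B, C, D : V → V be linear maps such that the map Y(x,y) = (Ax + By, Cx + Dy) satisfies the Yang–Baxter equation. Let L : V → V be an invertible linear map that commutes with B, with C, and with the product AD. Then the map Ỹ(x,y) = (LAx + By, Cx + DL⁻¹y) also satisfies the Yang–Baxter equation. -/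
lemma add3_congr {M : Type*} [AddCommGroup M] {a1 a2 a3 b1 b2 b3 l r : M}
    (h1 : a1 = b1) (h2 : a2 = b2) (h3 : a3 = b3)
    (hl : l = a1 + a2 + a3) (hr : r = b1 + b2 + b3) : l = r :=
  hl.trans ((congrArg₂ (· + ·) (congrArg₂ (· + ·) h1 h2) h3).trans hr.symm)

lemma isYB_of {K V : Type*} [Field K] [AddCommGroup V] [Module K V]
    (A B C D : Module.End K V)
    (k1 : A * B * C + B * A = A * B)
    (k2 : A * B * D + B * B = B)
    (k3 : C * A = A * C + B * (C * A))
    (k4 : C * B * C + D * A = A * D + B * (C * B))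
    (k5 : C * B * D + D * B = B * D)
    (k6 : C * C + D * (C * A) = C)
    (k7 : D * C = C * D + D * (C * B)) :
    IsYB (fun p : V × V => (A p.1 + B p.2, C p.1 + D p.2)) := by
  have h1 : ∀ y : V, A (B (C y)) + B (A y) = A (B y) := fun y => by
    simpa [Module.End.mul_apply] using LinearMap.ext_iff.mp k1 y
  have h2 : ∀ z : V, A (B (D z)) + B (B z) = B z := fun z => by
    simpa [Module.End.mul_apply] using LinearMap.ext_iff.mp k2 z
  have h3 : ∀ x : V, C (A x) = A (C x) + B (C (A x)) := fun x => by
    simpa [Module.End.mul_apply] using LinearMap.ext_iff.mp k3 x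
  have h4 : ∀ y : V, C (B (C y)) + D (A y) = A (D y) + B (C (B y)) := fun y => by
    simpa [Module.End.mul_apply] using LinearMap.ext_iff.mp k4 y
  have h5 : ∀ z : V, C (B (D z)) + D (B z) = B (D z) := fun z => by
    simpa [Module.End.mul_apply] using LinearMap.ext_iff.mp k5 z
  have h6 : ∀ x : V, C x = C (C x) + D (C (A x)) := fun x => by
    simpa [Module.End.mul_apply] using (LinearMap.ext_iff.mp k6 x).symm
  have h7 : ∀ y : V, D (C y) = C (D y) + D (C (B y)) := fun y => by
    simpa [Module.End.mul_apply] using LinearMap.ext_iff.mp k7 y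
  unfold IsYB
  funext p
  obtain ⟨x, y, z⟩ := p
  simp only [yb12, yb13, yb23, Function.comp_apply, Prod.mk.injEq]
  refine ⟨?_, ?_, ?_⟩
  · exact add3_congr rfl (h1 y) (h2 z) (by simp only [map_add]; try abel)
      (by simp only [map_add]; try abel)
  · exact add3_congr (h3 x) (h4 y) (h5 z) (by simp only [map_add]; try abel)
      (by simp only [map_add]; try abel)
  · exact add3_congr (h6 x) (h7 y) (rfl : D (D z) = D (D z))
      (by simp only [map_add]; try abel) (by simp only [map_add]; try abel)

theorem stmt3 {K V : Type*} [Field K] [AddCommGroup V] [Module K V]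
    (A B C D : Module.End K V) (L : (Module.End K V)ˣ)
    (hB : (L : Module.End K V) * B = B * (L : Module.End K V))
    (hC : (L : Module.End K V) * C = C * (L : Module.End K V))
    (hAD : (L : Module.End K V) * (A * D) = (A * D) * (L : Module.End K V))
    (h : IsYB (fun p : V × V => (A p.1 + B p.2, C p.1 + D p.2))) :
    IsYB (fun p : V × V =>
      (((L : Module.End K V) * A) p.1 + B p.2,
        C p.1 + (D * ((L⁻¹ : (Module.End K V)ˣ) : Module.End K V)) p.2)) := by
  -- extract the seven operator identities from `h`
  have h' := fun x y z : V => congrFun h (x, y, z)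
  simp only [yb12, yb13, yb23, Function.comp_apply, Prod.mk.injEq] at h'
  have e1 := fun y : V => h' 0 y 0
  simp only [map_zero, zero_add, add_zero] at e1
  have e2 := fun z : V => h' 0 0 z
  simp only [map_zero, zero_add, add_zero] at e2
  have e3 := fun x : V => h' x 0 0
  simp only [map_zero, zero_add, add_zero] at e3
  have k1 : A * B * C + B * A = A * B :=
    LinearMap.ext fun y => by
      simpa [Module.End.mul_apply] using (e1 y).1
  have k2 : A * B * D + B * B = B :=
    LinearMap.ext fun z => by
      simpa [Module.End.mul_apply] using (e2 z).1
  have k3 : C * A = A * C + B * (C * A) :=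
    LinearMap.ext fun x => by
      simpa [Module.End.mul_apply] using (e3 x).2.1
  have k4 : C * B * C + D * A = A * D + B * (C * B) :=
    LinearMap.ext fun y => by
      simpa [Module.End.mul_apply] using (e1 y).2.1
  have k5 : C * B * D + D * B = B * D :=
    LinearMap.ext fun z => by
      simpa [Module.End.mul_apply] using (e2 z).2.1
  have k6 : C * C + D * (C * A) = C :=
    LinearMap.ext fun x => by
      simpa [Module.End.mul_apply] using (e3 x).2.2.symm
  have k7 : D * C = C * D + D * (C * B) :=
    LinearMap.ext fun y => by
      simpa [Module.End.mul_apply] using (e1 y).2.2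
  -- commutation facts
  set Lv : Module.End K V := (L : Module.End K V) with hLv
  set Li : Module.End K V := ((L⁻¹ : (Module.End K V)ˣ) : Module.End K V) with hLi
  have cB : Commute Lv B := hB
  have cC : Commute Lv C := hC
  have cB' : Commute Li B := cB.units_inv_left
  have cC' : Commute Li C := cC.units_inv_left
  have hmul : Lv * Li = 1 := L.mul_inv
  have hmul' : Li * Lv = 1 := L.inv_mul
  -- the seven identities for the transformed operators
  have K1 : (Lv * A) * B * C + B * (Lv * A) = (Lv * A) * B := by
    calc (Lv * A) * B * C + B * (Lv * A)
        = Lv * (A * B * C) + (B * Lv) * A := by noncomm_ring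
      _ = Lv * (A * B * C) + (Lv * B) * A := by rw [cB.eq]
      _ = Lv * (A * B * C + B * A) := by noncomm_ring
      _ = Lv * (A * B) := by rw [k1]
      _ = (Lv * A) * B := by noncomm_ring
  have K2 : (Lv * A) * B * (D * Li) + B * B = B := by
    have k2' : A * B * D = B - B * B := eq_sub_of_add_eq k2
    have cBB : Commute Lv (B - B * B) := cB.sub_right (cB.mul_right cB)
    calc (Lv * A) * B * (D * Li) + B * B
        = Lv * (A * B * D) * Li + B * B := by noncomm_ring
      _ = Lv * (B - B * B) * Li + B * B := by rw [k2']
      _ = (B - B * B) * Lv * Li + B * B := by rw [cBB.eq]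
      _ = B - B * B + B * B := by rw [mul_assoc, hmul, mul_one]
      _ = B := by abel
  have K3 : C * (Lv * A) = (Lv * A) * C + B * (C * (Lv * A)) := by
    calc C * (Lv * A)
        = (C * Lv) * A := by noncomm_ring
      _ = (Lv * C) * A := by rw [cC.eq]
      _ = Lv * (C * A) := by noncomm_ring
      _ = Lv * (A * C + B * (C * A)) := congrArg (fun t => Lv * t) k3
      _ = Lv * A * C + (Lv * B) * (C * A) := by noncomm_ring
      _ = Lv * A * C + (B * Lv) * (C * A) := by rw [cB.eq]
      _ = Lv * A * C + B * ((Lv * C) * A) := by noncomm_ring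
      _ = Lv * A * C + B * ((C * Lv) * A) := by rw [cC.eq]
      _ = (Lv * A) * C + B * (C * (Lv * A)) := by noncomm_ring
  have K4 : C * B * C + (D * Li) * (Lv * A) = (Lv * A) * (D * Li) + B * (C * B) := by
    calc C * B * C + (D * Li) * (Lv * A)
        = C * B * C + D * ((Li * Lv) * A) := by noncomm_ring
      _ = C * B * C + D * A := by rw [hmul', one_mul]
      _ = A * D + B * (C * B) := k4
      _ = (A * D) * (Lv * Li) + B * (C * B) := by rw [hmul, mul_one]
      _ = ((A * D) * Lv) * Li + B * (C * B) := by noncomm_ring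
      _ = (Lv * (A * D)) * Li + B * (C * B) := by rw [hAD]
      _ = (Lv * A) * (D * Li) + B * (C * B) := by noncomm_ring
  have K5 : C * B * (D * Li) + (D * Li) * B = B * (D * Li) := by
    calc C * B * (D * Li) + (D * Li) * B
        = (C * B * D) * Li + D * (Li * B) := by noncomm_ring
      _ = (C * B * D) * Li + D * (B * Li) := by rw [cB'.eq]
      _ = (C * B * D + D * B) * Li := by noncomm_ring
      _ = (B * D) * Li := by rw [k5]
      _ = B * (D * Li) := by noncomm_ring
  have K6 : C * C + (D * Li) * (C * (Lv * A)) = C := by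
    calc C * C + (D * Li) * (C * (Lv * A))
        = C * C + D * ((Li * C) * (Lv * A)) := by noncomm_ring
      _ = C * C + D * ((C * Li) * (Lv * A)) := by rw [cC'.eq]
      _ = C * C + D * (C * ((Li * Lv) * A)) := by noncomm_ring
      _ = C * C + D * (C * A) := by rw [hmul', one_mul]
      _ = C := k6
  have K7 : (D * Li) * C = C * (D * Li) + (D * Li) * (C * B) := by
    calc (D * Li) * C
        = D * (Li * C) := by noncomm_ring
      _ = D * (C * Li) := by rw [cC'.eq]
      _ = (D * C) * Li := by noncomm_ring
      _ = (C * D + D * (C * B)) * Li := by rw [k7]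
      _ = C * (D * Li) + D * (C * (B * Li)) := by noncomm_ring
      _ = C * (D * Li) + D * (C * (Li * B)) := by rw [cB'.eq]
      _ = C * (D * Li) + D * ((C * Li) * B) := by noncomm_ring
      _ = C * (D * Li) + D * ((Li * C) * B) := by rw [cC'.eq]
      _ = C * (D * Li) + (D * Li) * (C * B) := by noncomm_ring
  exact isYB_of (Lv * A) B C (D * Li) K1 K2 K3 K4 K5 K6 K7
end

section
/- Let K be a field, n a positive integer, and A, B, C, D ∈ Mat_n(K) such that the map Y(x,y) = (Ax + By, Cx + Dy) on Kⁿ × Kⁿ satisfies the Yang–Baxter equation. Then the map Ỹ(x,y) = (Dᵀx + Bᵀy, Cᵀx + Aᵀy), defined using the transpose matrices, also satisfies the Yang–Baxter equation. -/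
private lemma mulVec_ext {K : Type*} [Field K] {n : ℕ} {M N : Matrix (Fin n) (Fin n) K}
    (h : ∀ v : Fin n → K, M.mulVec v = N.mulVec v) : M = N := by
  ext i j
  have := congrFun (h (Pi.single j 1)) i
  simpa using this

private lemma linYB_of_eqs {K : Type*} [Field K] {n : ℕ}
    (A B C D : Matrix (Fin n) (Fin n) K)
    (h1 : A*(B*C) + B*A = A*B)
    (h2 : A*(B*D) + B*B = B)
    (h3 : C*A = A*C + B*(C*A))
    (h4 : C*(B*C) + D*A = A*D + B*(C*B))
    (h5 : C*(B*D) + D*B = B*D)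
    (h6 : C = C*C + D*(C*A))
    (h7 : D*C = C*D + D*(C*B)) :
    IsYB (fun p : (Fin n → K) × (Fin n → K) =>
      (A.mulVec p.1 + B.mulVec p.2, C.mulVec p.1 + D.mulVec p.2)) := by
  funext p
  obtain ⟨x, y, z⟩ := p
  have hv1 := congrArg (fun M => Matrix.mulVec M y) h1
  have hv2 := congrArg (fun M => Matrix.mulVec M z) h2
  have hv3 := congrArg (fun M => Matrix.mulVec M x) h3
  have hv4 := congrArg (fun M => Matrix.mulVec M y) h4
  have hv5 := congrArg (fun M => Matrix.mulVec M z) h5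
  have hv6 := congrArg (fun M => Matrix.mulVec M x) h6
  have hv7 := congrArg (fun M => Matrix.mulVec M y) h7
  simp only [Matrix.add_mulVec] at hv1 hv2 hv3 hv4 hv5 hv6 hv7
  simp only [IsYB, yb12, yb13, yb23, Function.comp_apply, Prod.mk.injEq]
  refine ⟨?_, ?_, ?_⟩
  · simp only [Matrix.mulVec_add, Matrix.mulVec_mulVec, mul_assoc]
    linear_combination hv1 + hv2
  · simp only [Matrix.mulVec_add, Matrix.mulVec_mulVec, mul_assoc]
    linear_combination hv3 + hv4 + hv5
  · simp only [Matrix.mulVec_add, Matrix.mulVec_mulVec, mul_assoc]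
    linear_combination hv6 + hv7

private lemma eqs_of_linYB {K : Type*} [Field K] {n : ℕ}
    (A B C D : Matrix (Fin n) (Fin n) K)
    (h : IsYB (fun p : (Fin n → K) × (Fin n → K) =>
      (A.mulVec p.1 + B.mulVec p.2, C.mulVec p.1 + D.mulVec p.2))) :
    A*(B*C) + B*A = A*B ∧ A*(B*D) + B*B = B ∧ C*A = A*C + B*(C*A) ∧
    C*(B*C) + D*A = A*D + B*(C*B) ∧ C*(B*D) + D*B = B*D ∧
    C = C*C + D*(C*A) ∧ D*C = C*D + D*(C*B) := by
  have key : ∀ x y z : Fin n → K,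
      (yb12 _ ∘ yb13 _ ∘ yb23 _) (x, y, z) = (yb23 _ ∘ yb13 _ ∘ yb12 _) (x, y, z) :=
    fun x y z => congrFun h (x, y, z)
  simp only [yb12, yb13, yb23, Function.comp_apply, Prod.mk.injEq] at key
  refine ⟨?_, ?_, ?_, ?_, ?_, ?_, ?_⟩ <;> apply mulVec_ext <;> intro v
  · have := (key 0 v 0).1
    simp only [Matrix.mulVec_zero, zero_add, add_zero, Matrix.mulVec_mulVec,
      Matrix.add_mulVec, mul_assoc] at this ⊢
    linear_combination this
  · have := (key 0 0 v).1
    simp only [Matrix.mulVec_zero, zero_add, add_zero, Matrix.mulVec_mulVec,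
      Matrix.add_mulVec, mul_assoc] at this ⊢
    linear_combination this
  · have := (key v 0 0).2.1
    simp only [Matrix.mulVec_zero, zero_add, add_zero, Matrix.mulVec_mulVec,
      Matrix.add_mulVec, mul_assoc] at this ⊢
    linear_combination this
  · have := (key 0 v 0).2.1
    simp only [Matrix.mulVec_zero, zero_add, add_zero, Matrix.mulVec_mulVec,
      Matrix.add_mulVec, mul_assoc] at this ⊢
    linear_combination this
  · have := (key 0 0 v).2.1
    simp only [Matrix.mulVec_zero, zero_add, add_zero, Matrix.mulVec_mulVec,
      Matrix.add_mulVec, mul_assoc] at this ⊢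
    linear_combination this
  · have := (key v 0 0).2.2
    simp only [Matrix.mulVec_zero, zero_add, add_zero, Matrix.mulVec_mulVec,
      Matrix.add_mulVec, mul_assoc] at this ⊢
    linear_combination this
  · have := (key 0 v 0).2.2
    simp only [Matrix.mulVec_zero, zero_add, add_zero, Matrix.mulVec_mulVec,
      Matrix.add_mulVec, mul_assoc] at this ⊢
    linear_combination this

theorem stmt4 {K : Type*} [Field K] {n : ℕ} (hn : 0 < n)
    (A B C D : Matrix (Fin n) (Fin n) K)
    (h : IsYB (fun p : (Fin n → K) × (Fin n → K) =>
      (A.mulVec p.1 + B.mulVec p.2, C.mulVec p.1 + D.mulVec p.2))) :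
    IsYB (fun p : (Fin n → K) × (Fin n → K) =>
      (Matrix.mulVec D.transpose p.1 + Matrix.mulVec B.transpose p.2, Matrix.mulVec C.transpose p.1 + Matrix.mulVec A.transpose p.2)) := by
  obtain ⟨e1, e2, e3, e4, e5, e6, e7⟩ := eqs_of_linYB A B C D h
  refine linYB_of_eqs D.transpose B.transpose C.transpose A.transpose ?_ ?_ ?_ ?_ ?_ ?_ ?_ <;>
  · first
    | simpa [Matrix.transpose_mul, mul_assoc] using congrArg Matrix.transpose e1
    | simpa [Matrix.transpose_mul, mul_assoc] using congrArg Matrix.transpose e2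
    | simpa [Matrix.transpose_mul, mul_assoc] using congrArg Matrix.transpose e3
    | simpa [Matrix.transpose_mul, mul_assoc] using congrArg Matrix.transpose e4
    | simpa [Matrix.transpose_mul, mul_assoc] using congrArg Matrix.transpose e5
    | simpa [Matrix.transpose_mul, mul_assoc] using congrArg Matrix.transpose e6
    | simpa [Matrix.transpose_mul, mul_assoc] using congrArg Matrix.transpose e7
end

section
/- Let K be a field, n a positive integer, and A, B, C, D ∈ Mat_n(K) such that the map Y(x,y) = (Ax + By, Cx + Dy) on Kⁿ × Kⁿ satisfies the Yang–Baxter equation. Let W = {(x,y) ∈ Kⁿ × Kⁿ : Cx + Dy = x and Ax + By = y}, the fixed subspace (eigenspace with eigenvalue 1) of the block matrix [[C, D],[A, B]]. Then dim W ≥ max(rank B, rank C). -/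
theorem stmt5 {K : Type*} [Field K] {n : ℕ} (hn : 0 < n)
    (A B C D : Matrix (Fin n) (Fin n) K)
    (h : IsYB (fun p : (Fin n → K) × (Fin n → K) =>
      (A.mulVec p.1 + B.mulVec p.2, C.mulVec p.1 + D.mulVec p.2))) :
    max B.rank C.rank ≤ Module.finrank K
      (LinearMap.ker
        ((LinearMap.prod
          (C.mulVecLin.comp (LinearMap.fst K (Fin n → K) (Fin n → K)) +
            D.mulVecLin.comp (LinearMap.snd K (Fin n → K) (Fin n → K)))
          (A.mulVecLin.comp (LinearMap.fst K (Fin n → K) (Fin n → K)) +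
            B.mulVecLin.comp (LinearMap.snd K (Fin n → K) (Fin n → K)))) -
          LinearMap.id)) := by
  unfold IsYB at h
  set Wk := LinearMap.ker
        ((LinearMap.prod
          (C.mulVecLin.comp (LinearMap.fst K (Fin n → K) (Fin n → K)) +
            D.mulVecLin.comp (LinearMap.snd K (Fin n → K) (Fin n → K)))
          (A.mulVecLin.comp (LinearMap.fst K (Fin n → K) (Fin n → K)) +
            B.mulVecLin.comp (LinearMap.snd K (Fin n → K) (Fin n → K)))) -
          LinearMap.id) with hWk
  have hB : ∀ z : Fin n → K,
      (A * (B * D)).mulVec z + (B * B).mulVec z = B.mulVec z ∧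
      (C * (B * D)).mulVec z + (D * B).mulVec z = (B * D).mulVec z := by
    intro z
    have h1 := congrFun h ((0 : Fin n → K), (0 : Fin n → K), z)
    simpa [yb12, yb13, yb23, Function.comp, Matrix.mulVec_add, Matrix.mulVec_zero,
      Prod.ext_iff] using h1
  have hC : ∀ x : Fin n → K,
      (C * A).mulVec x = (A * C).mulVec x + (B * (C * A)).mulVec x ∧
      C.mulVec x = (C * C).mulVec x + (D * (C * A)).mulVec x := by
    intro x
    have h1 := congrFun h (x, (0 : Fin n → K), (0 : Fin n → K))
    simpa [yb12, yb13, yb23, Function.comp, Matrix.mulVec_add, Matrix.mulVec_zero,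
      Prod.ext_iff] using h1
  have memB : ∀ z : Fin n → K, ((B * D).mulVec z, B.mulVec z) ∈ Wk := by
    intro z
    rw [hWk, LinearMap.mem_ker, LinearMap.sub_apply, sub_eq_zero]
    refine Prod.ext ?_ ?_ <;>
      simp [Matrix.mulVec_mulVec, (hB z).1, (hB z).2]
  have memC : ∀ x : Fin n → K, (C.mulVec x, (C * A).mulVec x) ∈ Wk := by
    intro x
    rw [hWk, LinearMap.mem_ker, LinearMap.sub_apply, sub_eq_zero]
    refine Prod.ext ?_ ?_ <;>
      simp [Matrix.mulVec_mulVec, (hC x).1.symm, (hC x).2.symm]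
  set g : Wk →ₗ[K] (Fin n → K) × (Fin n → K) := Wk.subtype
  have bound : ∀ (M : Matrix (Fin n) (Fin n) K)
      (φ : (Fin n → K) →ₗ[K] (Fin n → K) × (Fin n → K))
      (pr : ((Fin n → K) × (Fin n → K)) →ₗ[K] (Fin n → K)),
      (∀ z, φ z ∈ Wk) → pr.comp φ = M.mulVecLin →
      M.rank ≤ Module.finrank K Wk := by
    intro M φ pr mem hpr
    set f : (Fin n → K) →ₗ[K] Wk := LinearMap.codRestrict Wk φ mem with hf
    have hcomp : M.mulVecLin = (pr.comp g).comp f := by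
      refine LinearMap.ext fun z => ?_
      rw [← hpr]; rfl
    have h1 : LinearMap.range M.mulVecLin ≤ LinearMap.range (pr.comp g) := by
      rw [hcomp]; exact LinearMap.range_comp_le_range _ _
    calc M.rank = Module.finrank K (LinearMap.range M.mulVecLin) := rfl
      _ ≤ Module.finrank K (LinearMap.range (pr.comp g)) := Submodule.finrank_mono h1
      _ ≤ Module.finrank K Wk := LinearMap.finrank_range_le _
  have hBle : B.rank ≤ Module.finrank K Wk := by
    refine bound B (((B * D).mulVecLin).prod B.mulVecLin) (LinearMap.snd K _ _)
      (fun z => memB z) ?_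
    ext z; rfl
  have hCle : C.rank ≤ Module.finrank K Wk := by
    refine bound C ((C.mulVecLin).prod ((C * A).mulVecLin)) (LinearMap.fst K _ _)
      (fun z => memC z) ?_
    ext z; rfl
  exact max_le hBle hCle
end

section
/- Let K be a field, n a positive integer, and A, B, C, D ∈ Mat_n(K) such that the map Y(x,y) = (Ax + By, Cx + Dy) on Kⁿ × Kⁿ satisfies the Yang–Baxter equation. If the 2n × 2n block matrix [[C, D],[A, B]] is not equal to the 2n × 2n identity matrix, then det [[C, BD],[CA, B]] = 0, where [[C, BD],[CA, B]] is the 2n × 2n block matrix with blocks C, BD, CA, B. -/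
theorem stmt6 {K : Type*} [Field K] {n : ℕ} (hn : 0 < n)
    (A B C D : Matrix (Fin n) (Fin n) K)
    (h : IsYB (fun p : (Fin n → K) × (Fin n → K) =>
      (A.mulVec p.1 + B.mulVec p.2, C.mulVec p.1 + D.mulVec p.2)))
    (hne : Matrix.fromBlocks C D A B ≠ 1) :
    (Matrix.fromBlocks C (B * D) (C * A) B).det = 0 := by
  classical
  have key : ∀ (M N : Matrix (Fin n) (Fin n) K), (∀ v, M.mulVec v = N.mulVec v) → M = N := by
    intro M N hMN
    ext i j
    have := congrFun (hMN (Pi.single j 1)) i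
    simpa [Matrix.mulVec_single] using this
  rw [IsYB] at h
  have hx := fun x : Fin n → K => congrFun h (x, 0, 0)
  have hz := fun z : Fin n → K => congrFun h (0, 0, z)
  simp only [yb12, yb13, yb23, Function.comp, Matrix.mulVec_add, Matrix.mulVec_zero,
    add_zero, zero_add, Matrix.mulVec_mulVec, Prod.mk.injEq] at hx hz
  -- Equation (3): C*A = A*C + B*(C*A)
  have e3 : C * A = A * C + B * (C * A) := key _ _ (fun v => by
    simpa [Matrix.add_mulVec] using (hx v).2.1)
  -- Equation (6): C = C*C + D*(C*A)
  have e6 : C = C * C + D * (C * A) := key _ _ (fun v => by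
    simpa [Matrix.add_mulVec] using (hx v).2.2)
  -- Equation (2): A*(B*D) + B*B = B
  have e2 : A * (B * D) + B * B = B := key _ _ (fun v => by
    simpa [Matrix.add_mulVec] using (hz v).1)
  -- Equation (5): C*(B*D) + D*B = B*D
  have e5 : C * (B * D) + D * B = B * D := key _ _ (fun v => by
    simpa [Matrix.add_mulVec] using (hz v).2.1)
  set M := Matrix.fromBlocks C (B * D) (C * A) B with hM
  set Q := Matrix.fromBlocks C D A B - 1 with hQ
  have hQM : Q * M = 0 := by
    rw [hQ, hM, ← Matrix.fromBlocks_one, Matrix.sub_mul, Matrix.fromBlocks_multiply,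
      Matrix.fromBlocks_multiply, sub_eq_zero]
    simp only [Matrix.one_mul, Matrix.zero_mul, add_zero, zero_add]
    rw [e2, e5, ← e3, ← e6]
  by_contra hdet
  have hu : IsUnit M.det := isUnit_iff_ne_zero.mpr hdet
  have hMi : M * M⁻¹ = 1 := Matrix.mul_nonsing_inv M hu
  have hQ0 : Q = 0 := by
    calc Q = Q * (M * M⁻¹) := by rw [hMi, Matrix.mul_one]
    _ = (Q * M) * M⁻¹ := by rw [Matrix.mul_assoc]
    _ = 0 := by rw [hQM, Matrix.zero_mul]
  exact hne (sub_eq_zero.mp hQ0)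
end

section
/- Let V be a vector space over a field K, Ω a set, and for each a, b ∈ Ω let A_{a,b}, B_{a,b}, C_{a,b}, D_{a,b} : V → V be linear maps. The family of linear maps Y_{a,b}(x,y) = (A_{a,b}x + B_{a,b}y, C_{a,b}x + D_{a,b}y) satisfies the parametric Yang–Baxter equation Y¹²_{a,b} ∘ Y¹³_{a,c} ∘ Y²³_{b,c} = Y²³_{b,c} ∘ Y¹³_{a,c} ∘ Y¹²_{a,b} for all a, b, c ∈ Ω if and only if the following relations hold for all a, b, c ∈ Ω: C_{b,c}C_{a,b} = C_{a,c} − D_{b,c}C_{a,c}A_{a,b}; B_{a,b}B_{b,c} = B_{a,c} − A_{a,b}B_{a,c}D_{b,c}; D_{a,c}C_{b,c} − C_{b,c}D_{a,b} = D_{b,c}C_{a,c}B_{a,b}; A_{a,c}B_{a,b} − B_{a,b}A_{b,c} = A_{a,b}B_{a,c}C_{b,c}; C_{a,b}A_{a,c} − A_{b,c}C_{a,b} = B_{b,c}C_{a,c}A_{a,b}; B_{b,c}D_{a,c} − D_{a,b}B_{b,c} = C_{a,b}B_{a,c}D_{b,c}; D_{a,b}A_{b,c} − B_{b,c}C_{a,c}B_{a,b}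 = A_{b,c}D_{a,b} − C_{a,b}B_{a,c}C_{b,c}; A_{a,b}A_{a,c} = A_{a,c}A_{a,b}; and D_{a,c}D_{b,c} = D_{b,c}D_{a,c}. -/
theorem stmt7 {K V Ω : Type*} [Field K] [AddCommGroup V] [Module K V]
    (A B C D : Ω → Ω → Module.End K V) :
    IsParamYB (fun (a b : Ω) (p : V × V) =>
      (A a b p.1 + B a b p.2, C a b p.1 + D a b p.2)) ↔
      (∀ a b c : Ω,
        C b c * C a b = C a c - D b c * C a c * A a b ∧
        B a b * B b c = B a c - A a b * B a c * D b c ∧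
        D a c * C b c - C b c * D a b = D b c * C a c * B a b ∧
        A a c * B a b - B a b * A b c = A a b * B a c * C b c ∧
        C a b * A a c - A b c * C a b = B b c * C a c * A a b ∧
        B b c * D a c - D a b * B b c = C a b * B a c * D b c ∧
        D a b * A b c - B b c * C a c * B a b = A b c * D a b - C a b * B a c * C b c ∧
        A a b * A a c = A a c * A a b ∧
        D a c * D b c = D b c * D a c) := by
  constructor
  · intro h a b c
    have hx : ∀ x : V, _ := fun x : V => congrFun (h a b c) (x, 0, 0)
    have hy : ∀ y : V, _ := fun y : V => congrFun (h a b c) (0, y, 0)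
    have hz : ∀ z : V, _ := fun z : V => congrFun (h a b c) (0, 0, z)
    simp only [yb12, yb13, yb23, Function.comp_apply, Prod.mk.injEq, map_add, map_zero,
      add_zero, zero_add] at hx hy hz
    refine ⟨?_, ?_, ?_, ?_, ?_, ?_, ?_, ?_, ?_⟩ <;> ext v <;>
      simp only [Module.End.mul_apply, LinearMap.sub_apply]
    · rw [eq_sub_iff_add_eq]; exact (hx v).2.2.symm
    · rw [eq_sub_iff_add_eq, add_comm]; exact (hz v).1
    · rw [sub_eq_iff_eq_add']; exact (hy v).2.2
    · rw [sub_eq_iff_eq_add]; exact (hy v).1.symm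
    · rw [sub_eq_iff_eq_add']; exact (hx v).2.1
    · rw [sub_eq_iff_eq_add]; exact (hz v).2.1.symm
    · rw [sub_eq_sub_iff_add_eq_add, add_comm]; exact (hy v).2.1
    · exact (hx v).1
    · exact (hz v).2.2
  · intro h a b c
    obtain ⟨h1, h2, h3, h4, h5, h6, h7, h8, h9⟩ := h a b c
    funext p
    obtain ⟨x, y, z⟩ := p
    have p1 : A a c (A a b x) = A a b (A a c x) := LinearMap.congr_fun h8.symm x
    have p2 : A a c (B a b y) = A a b (B a c (C b c y)) + B a b (A b c y) := by
      have := LinearMap.congr_fun h4 y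
      simp only [Module.End.mul_apply, LinearMap.sub_apply] at this
      rw [sub_eq_iff_eq_add] at this
      rw [this]
    have p3 : B a c z = A a b (B a c (D b c z)) + B a b (B b c z) := by
      have := LinearMap.congr_fun h2 z
      simp only [Module.End.mul_apply, LinearMap.sub_apply] at this
      rw [eq_sub_iff_add_eq] at this
      rw [← this]; abel
    have q1 : C a b (A a c x) = A b c (C a b x) + B b c (C a c (A a b x)) := by
      have := LinearMap.congr_fun h5 x
      simp only [Module.End.mul_apply, LinearMap.sub_apply] at this
      rw [sub_eq_iff_eq_add'] at this
      exact this
    have q2 : A b c (D a b y) =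
        C a b (B a c (C b c y)) + D a b (A b c y) - B b c (C a c (B a b y)) := by
      have := LinearMap.congr_fun h7 y
      simp only [Module.End.mul_apply, LinearMap.sub_apply] at this
      rw [sub_eq_sub_iff_add_eq_add] at this
      rw [eq_sub_iff_add_eq, ← this]; abel
    have q3 : B b c (D a c z) = C a b (B a c (D b c z)) + D a b (B b c z) := by
      have := LinearMap.congr_fun h6 z
      simp only [Module.End.mul_apply, LinearMap.sub_apply] at this
      rw [sub_eq_iff_eq_add] at this
      rw [this]
    have r1 : C a c x = C b c (C a b x) + D b c (C a c (A a b x)) := by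
      have := LinearMap.congr_fun h1 x
      simp only [Module.End.mul_apply, LinearMap.sub_apply] at this
      rw [eq_sub_iff_add_eq] at this
      rw [← this]
    have r2 : D a c (C b c y) = C b c (D a b y) + D b c (C a c (B a b y)) := by
      have := LinearMap.congr_fun h3 y
      simp only [Module.End.mul_apply, LinearMap.sub_apply] at this
      rw [sub_eq_iff_eq_add'] at this
      exact this
    have r3 : D a c (D b c z) = D b c (D a c z) := by
      have := LinearMap.congr_fun h9 z
      simpa only [Module.End.mul_apply] using this
    simp only [yb12, yb13, yb23, Function.comp_apply, Prod.mk.injEq, map_add]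
    refine ⟨?_, ?_, ?_⟩
    · rw [p1, p2, p3]; abel
    · rw [q1, q2, q3]; abel
    · rw [r1, r2, r3]; abel
end

section
/- Let V be a vector space over a field K, Ω a set, and for a, b ∈ Ω let A_{a,b}, B_{a,b}, C_{a,b}, D_{a,b} : V → V be linear maps such that the family Y_{a,b}(x,y) = (A_{a,b}x + B_{a,b}y, C_{a,b}x + D_{a,b}y) satisfies the parametric Yang–Baxter equation. Let L : V → V be an invertible linear map that commutes with A_{a,b}, B_{a,b}, C_{a,b}, and D_{a,b} for all a, b ∈ Ω. Then the family Ỹ_{a,b}(x,y) = (LA_{a,b}x + B_{a,b}y, C_{a,b}x + D_{a,b}L⁻¹y) also satisfies the parametric Yang–Baxter equation. -/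
theorem stmt9 {K V Ω : Type*} [Field K] [AddCommGroup V] [Module K V]
    (A B C D : Ω → Ω → Module.End K V) (L : (Module.End K V)ˣ)
    (hA : ∀ a b : Ω, (L : Module.End K V) * A a b = A a b * (L : Module.End K V))
    (hB : ∀ a b : Ω, (L : Module.End K V) * B a b = B a b * (L : Module.End K V))
    (hC : ∀ a b : Ω, (L : Module.End K V) * C a b = C a b * (L : Module.End K V))
    (hD : ∀ a b : Ω, (L : Module.End K V) * D a b = D a b * (L : Module.End K V))
    (h : IsParamYB (fun (a b : Ω) (p : V × V) =>
      (A a b p.1 + B a b p.2, C a b p.1 + D a b p.2))) :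
    IsParamYB (fun (a b : Ω) (p : V × V) =>
      (((L : Module.End K V) * A a b) p.1 + B a b p.2,
        C a b p.1 + (D a b * ((L⁻¹ : (Module.End K V)ˣ) : Module.End K V)) p.2)) := by
  set Lm : Module.End K V := (L : Module.End K V) with hLm
  set Li : Module.End K V := ((L⁻¹ : (Module.End K V)ˣ) : Module.End K V) with hLi
  have cancel1 : ∀ v : V, Li (Lm v) = v := by
    intro v
    rw [← Module.End.mul_apply]
    simp [hLm, hLi]
  have cancel2 : ∀ v : V, Lm (Li v) = v := by
    intro v
    rw [← Module.End.mul_apply]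
    simp [hLm, hLi]
  have push : ∀ (E : Ω → Ω → Module.End K V),
      (∀ a b, Lm * E a b = E a b * Lm) →
      (∀ a b v, E a b (Lm v) = Lm (E a b v)) ∧ (∀ a b v, E a b (Li v) = Li (E a b v)) := by
    intro E hE
    constructor
    · intro a b v
      rw [← Module.End.mul_apply, ← hE, Module.End.mul_apply]
    · intro a b v
      have : E a b (Li v) = Li (Lm (E a b (Li v))) := (cancel1 _).symm
      rw [this, ← Module.End.mul_apply Lm, hE, Module.End.mul_apply, cancel2]
  obtain ⟨hA1, hA2⟩ := push A hA
  obtain ⟨hB1, hB2⟩ := push B hB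
  obtain ⟨hC1, hC2⟩ := push C hC
  obtain ⟨hD1, hD2⟩ := push D hD
  intro a b c
  funext p
  obtain ⟨x, y, z⟩ := p
  have key := congrFun (h a b c) (Lm x, y, Li z)
  have key' := congrArg
    (fun t : V × V × V => (Lm t.1, t.2.1, Li t.2.2)) key
  refine Eq.trans ?_ (Eq.trans key' ?_)
  · simp only [Function.comp_apply, yb12, yb13, yb23, Module.End.mul_apply,
      map_add, hA1, hA2, hB1, hB2, hC1, hC2, hD1, hD2, cancel1, cancel2]
  · simp only [Function.comp_apply, yb12, yb13, yb23, Module.End.mul_apply,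
      map_add, hA1, hA2, hB1, hB2, hC1, hC2, hD1, hD2, cancel1, cancel2]
end

section
/- Let K be a field, n a positive integer, Ω a set, and for a, b ∈ Ω let A_{a,b}, B_{a,b}, C_{a,b}, D_{a,b} ∈ Mat_n(K) be such that the family Y_{a,b}(x,y) = (A_{a,b}x + B_{a,b}y, C_{a,b}x + D_{a,b}y) on Kⁿ × Kⁿ satisfies the parametric Yang–Baxter equation. Then the family Ỹ_{a,b}(x,y) = (Aᵀ_{a,b}x + Cᵀ_{a,b}y, Bᵀ_{a,b}x + Dᵀ_{a,b}y), defined using the transpose matrices, also satisfies the parametric Yang–Baxter equation. -/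
open Matrix in
private lemma mv_ext' {K : Type*} [Field K] {n : ℕ} {M N : Matrix (Fin n) (Fin n) K}
    (h : ∀ v, M *ᵥ v = N *ᵥ v) : M = N := by
  ext i j
  simpa using congrFun (h (Pi.single j 1)) i

open Matrix in
private lemma yb_lin_iff {K : Type*} [Field K] {n : ℕ}
    (A1 B1 C1 D1 A2 B2 C2 D2 A3 B3 C3 D3 : Matrix (Fin n) (Fin n) K) :
    (yb12 (fun p => (A1 *ᵥ p.1 + B1 *ᵥ p.2, C1 *ᵥ p.1 + D1 *ᵥ p.2))
       ∘ yb13 (fun p => (A2 *ᵥ p.1 + B2 *ᵥ p.2, C2 *ᵥ p.1 + D2 *ᵥ p.2))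
       ∘ yb23 (fun p => (A3 *ᵥ p.1 + B3 *ᵥ p.2, C3 *ᵥ p.1 + D3 *ᵥ p.2))
     = yb23 (fun p => (A3 *ᵥ p.1 + B3 *ᵥ p.2, C3 *ᵥ p.1 + D3 *ᵥ p.2))
       ∘ yb13 (fun p => (A2 *ᵥ p.1 + B2 *ᵥ p.2, C2 *ᵥ p.1 + D2 *ᵥ p.2))
       ∘ yb12 (fun p => (A1 *ᵥ p.1 + B1 *ᵥ p.2, C1 *ᵥ p.1 + D1 *ᵥ p.2)))
    ↔ (A1*A2 = A2*A1 ∧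
       A1*(B2*C3) + B1*A3 = A2*B1 ∧
       A1*(B2*D3) + B1*B3 = B2 ∧
       C1*A2 = A3*C1 + B3*(C2*A1) ∧
       C1*(B2*C3) + D1*A3 = A3*D1 + B3*(C2*B1) ∧
       C1*(B2*D3) + D1*B3 = B3*D2 ∧
       C2 = C3*C1 + D3*(C2*A1) ∧
       D2*C3 = C3*D1 + D3*(C2*B1) ∧
       D2*D3 = D3*D2) := by
  constructor
  · intro H
    have hv : ∀ x y z : Fin n → K,
        ((A1 * A2) *ᵥ x + ((A1 * (B2 * C3)) *ᵥ y + (A1 * (B2 * D3)) *ᵥ z)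
          + ((B1 * A3) *ᵥ y + (B1 * B3) *ᵥ z)
         = (A2 * A1) *ᵥ x + (A2 * B1) *ᵥ y + B2 *ᵥ z) ∧
        ((C1 * A2) *ᵥ x + ((C1 * (B2 * C3)) *ᵥ y + (C1 * (B2 * D3)) *ᵥ z)
          + ((D1 * A3) *ᵥ y + (D1 * B3) *ᵥ z)
         = (A3 * C1) *ᵥ x + (A3 * D1) *ᵥ y
           + ((B3 * (C2 * A1)) *ᵥ x + (B3 * (C2 * B1)) *ᵥ y + (B3 * D2) *ᵥ z)) ∧
        (C2 *ᵥ x + ((D2 * C3) *ᵥ y + (D2 * D3) *ᵥ z)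
         = (C3 * C1) *ᵥ x + (C3 * D1) *ᵥ y
           + ((D3 * (C2 * A1)) *ᵥ x + (D3 * (C2 * B1)) *ᵥ y + (D3 * D2) *ᵥ z)) := by
      intro x y z
      simpa only [yb12, yb13, yb23, Function.comp_apply, Prod.mk.injEq,
        mulVec_add, mulVec_mulVec] using congrFun H (x, y, z)
    refine ⟨?_, ?_, ?_, ?_, ?_, ?_, ?_, ?_, ?_⟩ <;> refine mv_ext' fun v => ?_
    · simpa [add_mulVec] using (hv v 0 0).1
    · simpa [add_mulVec] using (hv 0 v 0).1
    · simpa [add_mulVec] using (hv 0 0 v).1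
    · simpa [add_mulVec] using (hv v 0 0).2.1
    · simpa [add_mulVec] using (hv 0 v 0).2.1
    · simpa [add_mulVec] using (hv 0 0 v).2.1
    · simpa [add_mulVec] using (hv v 0 0).2.2
    · simpa [add_mulVec] using (hv 0 v 0).2.2
    · simpa [add_mulVec] using (hv 0 0 v).2.2
  · rintro ⟨e11, e12, e13, e21, e22, e23, e31, e32, e33⟩
    funext p
    obtain ⟨x, y, z⟩ := p
    simp only [yb12, yb13, yb23, Function.comp_apply, Prod.mk.injEq,
      mulVec_add, mulVec_mulVec]
    refine ⟨?_, ?_, ?_⟩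
    · trans ((A1*A2) *ᵥ x) + (((A1*(B2*C3)) *ᵥ y + (B1*A3) *ᵥ y)
        + ((A1*(B2*D3)) *ᵥ z + (B1*B3) *ᵥ z))
      · abel
      rw [← add_mulVec, ← add_mulVec, e11, e12, e13]
      abel
    · trans ((C1*A2) *ᵥ x) + (((C1*(B2*C3)) *ᵥ y + (D1*A3) *ᵥ y)
        + ((C1*(B2*D3)) *ᵥ z + (D1*B3) *ᵥ z))
      · abel
      rw [← add_mulVec, ← add_mulVec, e21, e22, e23]
      simp only [add_mulVec]
      abel
    · rw [e33]
      conv_lhs => rw [e31, e32]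
      simp only [add_mulVec]
      abel

theorem stmt10 {K : Type*} [Field K] {n : ℕ} (hn : 0 < n) {Ω : Type*}
    (A B C D : Ω → Ω → Matrix (Fin n) (Fin n) K)
    (h : IsParamYB (fun (a b : Ω) (p : (Fin n → K) × (Fin n → K)) =>
      ((A a b).mulVec p.1 + (B a b).mulVec p.2,
        (C a b).mulVec p.1 + (D a b).mulVec p.2))) :
    IsParamYB (fun (a b : Ω) (p : (Fin n → K) × (Fin n → K)) =>
      ((A a b).transpose.mulVec p.1 + (C a b).transpose.mulVec p.2,
        (B a b).transpose.mulVec p.1 + (D a b).transpose.mulVec p.2)) := by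
  intro a b c
  obtain ⟨e11, e12, e13, e21, e22, e23, e31, e32, e33⟩ :=
    (yb_lin_iff (A a b) (B a b) (C a b) (D a b) (A a c) (B a c) (C a c) (D a c)
      (A b c) (B b c) (C b c) (D b c)).mp (h a b c)
  refine (yb_lin_iff (A a b).transpose (C a b).transpose (B a b).transpose (D a b).transpose (A a c).transpose (C a c).transpose (B a c).transpose (D a c).transpose
      (A b c).transpose (C b c).transpose (B b c).transpose (D b c).transpose).mpr ⟨?_, ?_, ?_, ?_, ?_, ?_, ?_, ?_, ?_⟩
  · simpa [Matrix.transpose_mul, Matrix.transpose_add, Matrix.mul_assoc, add_comm]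
      using (congrArg Matrix.transpose e11).symm
  · simpa [Matrix.transpose_mul, Matrix.transpose_add, Matrix.mul_assoc, add_comm]
      using (congrArg Matrix.transpose e21).symm
  · simpa [Matrix.transpose_mul, Matrix.transpose_add, Matrix.mul_assoc, add_comm]
      using (congrArg Matrix.transpose e31).symm
  · simpa [Matrix.transpose_mul, Matrix.transpose_add, Matrix.mul_assoc, add_comm]
      using (congrArg Matrix.transpose e12).symm
  · simpa [Matrix.transpose_mul, Matrix.transpose_add, Matrix.mul_assoc, add_comm]
      using (congrArg Matrix.transpose e22).symm
  · simpa [Matrix.transpose_mul, Matrix.transpose_add, Matrix.mul_assoc, add_comm]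
      using (congrArg Matrix.transpose e32).symm
  · simpa [Matrix.transpose_mul, Matrix.transpose_add, Matrix.mul_assoc, add_comm]
      using (congrArg Matrix.transpose e13).symm
  · simpa [Matrix.transpose_mul, Matrix.transpose_add, Matrix.mul_assoc, add_comm]
      using (congrArg Matrix.transpose e23).symm
  · simpa [Matrix.transpose_mul, Matrix.transpose_add, Matrix.mul_assoc, add_comm]
      using (congrArg Matrix.transpose e33).symm
end

section
/- Let V be a vector space over a field K, Ω a set, and for a, b ∈ Ω let A_{a,b}, B_{a,b}, C_{a,b}, D_{a,b} : V → V be linear maps such that the family Y_{a,b}(x,y) = (A_{a,b}x + B_{a,b}y, C_{a,b}x + D_{a,b}y) satisfies the parametric Yang–Baxter equation. Then for any nonzero scalar l ∈ K, the family Y^l_{a,b}(x,y) = (l·A_{a,b}x + B_{a,b}y, C_{a,b}x + l⁻¹·D_{a,b}y) also satisfies the parametric Yang–Baxter equation. -/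
/-!
Write `g` for multiplication by `l` on `V`. Then `Y^l = (g × 1) ∘ Y ∘ (1 × g⁻¹)`, and since the
linear map `Y` commutes with `g × g`, also `Y^l = (1 × g⁻¹) ∘ Y ∘ (g × 1)`. Using the first form for
some legs `Y^{l,ij}` and the second for the others, all intermediate scalings cancel, and each side
of the Yang–Baxter equation for `Y^l` becomes the corresponding side for `Y`, pre- and
post-composed with `g × 1 × g⁻¹`.
-/

section Twist

variable {V Ω : Type*}

def twist (g : Equiv.Perm V) (Y : V × V → V × V) : V × V → V × V :=
  Prod.map g id ∘ Y ∘ Prod.map id ⇑g⁻¹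

variable (g : Equiv.Perm V) {Y : V × V → V × V}

theorem twist_eq_of_commute (hY : Function.Commute Y (Prod.map g g)) :
    twist g Y = Prod.map id ⇑g⁻¹ ∘ Y ∘ Prod.map g id := by
  funext ⟨x, y⟩
  have := hY (x, g⁻¹ y)
  simp_all [twist, Prod.map_apply']

theorem yb12_twist :
    yb12 (twist g Y) =
      Prod.map g (Prod.map id ⇑g⁻¹) ∘ yb12 Y ∘ Prod.map id (Prod.map ⇑g⁻¹ g) := by
  funext ⟨x, y, z⟩
  simp [yb12, twist, Prod.map_apply']

theorem yb13_twist :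
    yb13 (twist g Y) =
      Prod.map g (Prod.map ⇑g⁻¹ id) ∘ yb13 Y ∘ Prod.map id (Prod.map g ⇑g⁻¹) := by
  funext ⟨x, y, z⟩
  simp [yb13, twist, Prod.map_apply']

theorem yb23_twist :
    yb23 (twist g Y) =
      Prod.map ⇑g⁻¹ (Prod.map g id) ∘ yb23 Y ∘ Prod.map g (Prod.map id ⇑g⁻¹) := by
  funext ⟨x, y, z⟩
  simp [yb23, twist, Prod.map_apply']

theorem yb12_twist_of_commute (hY : Function.Commute Y (Prod.map g g)) :
    yb12 (twist g Y) =
      Prod.map id (Prod.map ⇑g⁻¹ g) ∘ yb12 Y ∘ Prod.map g (Prod.map id ⇑g⁻¹) := by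
  rw [twist_eq_of_commute g hY]
  funext ⟨x, y, z⟩
  simp [yb12, Prod.map_apply']

theorem yb13_twist_of_commute (hY : Function.Commute Y (Prod.map g g)) :
    yb13 (twist g Y) =
      Prod.map id (Prod.map g ⇑g⁻¹) ∘ yb13 Y ∘ Prod.map g (Prod.map ⇑g⁻¹ id) := by
  rw [twist_eq_of_commute g hY]
  funext ⟨x, y, z⟩
  simp [yb13, Prod.map_apply']

theorem yb23_twist_of_commute (hY : Function.Commute Y (Prod.map g g)) :
    yb23 (twist g Y) =
      Prod.map g (Prod.map id ⇑g⁻¹) ∘ yb23 Y ∘ Prod.map ⇑g⁻¹ (Prod.map g id) := by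
  rw [twist_eq_of_commute g hY]
  funext ⟨x, y, z⟩
  simp [yb23, Prod.map_apply']

theorem IsParamYB.twist {Y : Ω → Ω → V × V → V × V} (hYB : IsParamYB Y)
    (hcomm : ∀ a b, Function.Commute (Y a b) (Prod.map g g)) :
    IsParamYB fun a b => twist g (Y a b) := by
  intro a b c
  conv_lhs => rw [yb12_twist, yb13_twist_of_commute g (hcomm a c), yb23_twist]
  conv_rhs =>
    rw [yb12_twist_of_commute g (hcomm a b), yb13_twist, yb23_twist_of_commute g (hcomm b c)]
  simp only [Function.comp_assoc]
  simp only [← Function.comp_assoc (Prod.map _ _), Prod.map_comp_map]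
  simp only [← Equiv.Perm.coe_mul, inv_mul_cancel, mul_inv_cancel, Equiv.Perm.coe_one,
    Function.id_comp, Prod.map_id, Function.comp_id, Function.comp_assoc]
  simpa only [Function.comp_assoc] using
    congrArg (Prod.map g (Prod.map id ⇑g⁻¹) ∘ · ∘ Prod.map g (Prod.map id ⇑g⁻¹)) (hYB a b c)

end Twist

theorem stmt11 {K V Ω : Type*} [Field K] [AddCommGroup V] [Module K V]
    (A B C D : Ω → Ω → Module.End K V) (l : K) (hl : l ≠ 0)
    (h : IsParamYB (fun (a b : Ω) (p : V × V) =>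
      (A a b p.1 + B a b p.2, C a b p.1 + D a b p.2))) :
    IsParamYB (fun (a b : Ω) (p : V × V) =>
      (l • A a b p.1 + B a b p.2, C a b p.1 + l⁻¹ • D a b p.2)) := by
  let g : Equiv.Perm V := (LinearEquiv.smulOfNeZero K V l hl).toEquiv
  have hg : ⇑g = (l • ·) := rfl
  have hg_inv : ⇑g⁻¹ = (l⁻¹ • ·) := rfl
  have hcomm : ∀ a b, Function.Commute
      (fun p : V × V => (A a b p.1 + B a b p.2, C a b p.1 + D a b p.2)) (Prod.map g g) := by
    intro a b p
    simp [hg, smul_add]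
  convert h.twist g hcomm using 3 with a b
  funext p
  simp [twist, hg, hg_inv, smul_add, smul_smul, hl, Prod.map_apply']
end

section
/- Let V be a vector space over a field K, Ω a set, and for a, b ∈ Ω let A_{a,b}, B_{a,b}, C_{a,b}, D_{a,b} : V → V be linear maps such that the family Y_{a,b}(x,y) = (A_{a,b}x + B_{a,b}y, C_{a,b}x + D_{a,b}y) satisfies the parametric Yang–Baxter equation. Then for all a, b, c ∈ Ω the following four identities of linear maps hold: C_{a,b}C_{c,a} + D_{a,b}C_{c,b}A_{c,a} = C_{c,b}; C_{a,b}B_{a,c}D_{b,c} + D_{a,b}B_{b,c} = B_{b,c}D_{a,c}; A_{a,b}C_{c,a} + B_{a,b}C_{c,b}A_{c,a} = C_{c,a}A_{c,b}; and A_{a,b}B_{a,c}D_{b,c} + B_{a,b}B_{b,c} = B_{a,c}. Equivalently, the block operator matrix [[C_{a,b}, D_{a,b}],[A_{a,b}, B_{a,b}]] times [[C_{c,a}, B_{a,c}D_{b,c}],[C_{c,b}A_{c,a}, B_{b,c}]] equals [[C_{c,b}, B_{b,c}D_{a,c}],[C_{c,a}A_{c,b}, B_{a,c}]]. -/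
theorem stmt12 {K V Ω : Type*} [Field K] [AddCommGroup V] [Module K V]
    (A B C D : Ω → Ω → Module.End K V)
    (h : IsParamYB (fun (a b : Ω) (p : V × V) =>
      (A a b p.1 + B a b p.2, C a b p.1 + D a b p.2))) :
    ∀ a b c : Ω,
      C a b * C c a + D a b * (C c b * A c a) = C c b ∧
      C a b * (B a c * D b c) + D a b * B b c = B b c * D a c ∧
      A a b * C c a + B a b * (C c b * A c a) = C c a * A c b ∧
      A a b * (B a c * D b c) + B a b * B b c = B a c := by
  intro a b c
  refine ⟨?_, ?_, ?_, ?_⟩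
  · -- from h c a b at (x,0,0), third component
    ext x
    have key := congrFun (h c a b) (x, 0, 0)
    simp only [yb12, yb13, yb23, Function.comp, map_zero, map_add, add_zero, zero_add,
      Prod.mk.injEq] at key
    simpa [Module.End.mul_apply] using key.2.2.symm
  · -- from h a b c at (0,0,z), second component
    ext z
    have key := congrFun (h a b c) (0, 0, z)
    simp only [yb12, yb13, yb23, Function.comp, map_zero, map_add, add_zero, zero_add,
      Prod.mk.injEq] at key
    simpa [Module.End.mul_apply] using key.2.1
  · -- from h c a b at (x,0,0), second component
    ext x
    have key := congrFun (h c a b) (x, 0, 0)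
    simp only [yb12, yb13, yb23, Function.comp, map_zero, map_add, add_zero, zero_add,
      Prod.mk.injEq] at key
    simpa [Module.End.mul_apply] using key.2.1.symm
  · -- from h a b c at (0,0,z), first component
    ext z
    have key := congrFun (h a b c) (0, 0, z)
    simp only [yb12, yb13, yb23, Function.comp, map_zero, map_add, add_zero, zero_add,
      Prod.mk.injEq] at key
    simpa [Module.End.mul_apply] using key.1
end

section
/- Let V be a vector space over a field K, Ω a set, and for a, b ∈ Ω let A_{a,b}, B_{a,b}, C_{a,b}, D_{a,b} : V → V be linear maps such that the family Y_{a,b}(x,y) = (A_{a,b}x + B_{a,b}y, C_{a,b}x + D_{a,b}y) satisfies the parametric Yang–Baxter equation. Then for all a, b, c ∈ Ω the following four identities of linear maps hold: C_{b,c}C_{a,b} + D_{b,c}C_{a,c}A_{a,b} = C_{a,c}; C_{b,c}D_{a,b} + D_{b,c}C_{a,c}B_{a,b} = D_{a,c}C_{b,c}; A_{c,a}B_{c,b}C_{a,b} + B_{c,a}A_{a,b} = A_{c,b}B_{c,a}; and A_{c,a}B_{c,b}D_{a,b} + B_{c,a}B_{a,b} = B_{c,b}. Equivalently, the block operator matrix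 [[C_{b,c}, D_{b,c}C_{a,c}],[A_{c,a}B_{c,b}, B_{c,a}]] times [[C_{a,b}, D_{a,b}],[A_{a,b}, B_{a,b}]] equals [[C_{a,c}, D_{a,c}C_{b,c}],[A_{c,b}B_{c,a}, B_{c,b}]]. -/
theorem stmt13 {K V Ω : Type*} [Field K] [AddCommGroup V] [Module K V]
    (A B C D : Ω → Ω → Module.End K V)
    (h : IsParamYB (fun (a b : Ω) (p : V × V) =>
      (A a b p.1 + B a b p.2, C a b p.1 + D a b p.2))) :
    ∀ a b c : Ω,
      C b c * C a b + D b c * (C a c * A a b) = C a c ∧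
      C b c * D a b + D b c * (C a c * B a b) = D a c * C b c ∧
      (A c a * B c b) * C a b + B c a * A a b = A c b * B c a ∧
      (A c a * B c b) * D a b + B c a * B a b = B c b := by
  intro a b c
  refine ⟨?_, ?_, ?_, ?_⟩ <;> ext x
  · have e := congrFun (h a b c) (x, 0, 0)
    simp [yb12, yb13, yb23, Function.comp] at e
    simpa using e.2.2.symm
  · have e := congrFun (h a b c) (0, x, 0)
    simp [yb12, yb13, yb23, Function.comp] at e
    simpa using e.2.2.symm
  · have e := congrFun (h c a b) (0, x, 0)
    simp [yb12, yb13, yb23, Function.comp] at e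
    simpa using e.1
  · have e := congrFun (h c a b) (0, 0, x)
    simp [yb12, yb13, yb23, Function.comp] at e
    simpa using e.1
end

section
/- Let l ∈ ℂ be nonzero. For parameters a = (a₁, a₂) and b = (b₁, b₂) in ℂ² with a₁ ≠ b₂, define the linear map Y^l_{a,b} : ℂ × ℂ → ℂ × ℂ by Y^l_{a,b}(x, y) = ( l(a₁−b₁)/(a₁−b₂) · x + (b₁−b₂)/(a₁−b₂) · y , (a₁−a₂)/(a₁−b₂) · x + (a₂−b₂)/(l(a₁−b₂)) · y ). Then for all a = (a₁,a₂), b = (b₁,b₂), c = (c₁,c₂) ∈ ℂ² with a₁ ≠ b₂, a₁ ≠ c₂, and b₁ ≠ c₂, the parametric Yang–Baxter equation Y¹²_{a,b} ∘ Y¹³_{a,c} ∘ Y²³_{b,c} = Y²³_{b,c} ∘ Y¹³_{a,c} ∘ Y¹²_{a,b} holds as an identity of maps ℂ × ℂ × ℂ → ℂ × ℂ × ℂ. -/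
/-- The linear parametric map `Y^l_{a,b}` on `ℂ × ℂ` with parameters `a, b ∈ ℂ²`. -/
noncomputable def Y16 (l : ℂ) (a b : ℂ × ℂ) : ℂ × ℂ → ℂ × ℂ := fun p =>
  (l * (a.1 - b.1) / (a.1 - b.2) * p.1 + (b.1 - b.2) / (a.1 - b.2) * p.2,
   (a.1 - a.2) / (a.1 - b.2) * p.1 + (a.2 - b.2) / (l * (a.1 - b.2)) * p.2)

lemma Y16_eq (l : ℂ) (hl : l ≠ 0) (a b : ℂ × ℂ) (p : ℂ × ℂ) (h : a.1 - b.2 ≠ 0) :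
    Y16 l a b p = ((l * (a.1 - b.1) * p.1 + (b.1 - b.2) * p.2) / (a.1 - b.2),
      (l * (a.1 - a.2) * p.1 + (a.2 - b.2) * p.2) / (l * (a.1 - b.2))) := by
  simp only [Y16, Prod.mk.injEq]
  refine ⟨?_, ?_⟩ <;> field_simp
  all_goals try exact Or.inl trivial
  all_goals try ring
  all_goals (left; ring)

lemma Y16_ff (l : ℂ) (hl : l ≠ 0) (a b : ℂ × ℂ) (h : a.1 - b.2 ≠ 0)
    (xn yn : ℂ) (xd yd : ℂ) (hx : xd ≠ 0) (hy : yd ≠ 0) :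
    Y16 l a b (xn / xd, yn / yd) =
      ((l * (a.1 - b.1) * xn * yd + (b.1 - b.2) * yn * xd) / ((a.1 - b.2) * (xd * yd)),
       (l * (a.1 - a.2) * xn * yd + (a.2 - b.2) * yn * xd) / (l * ((a.1 - b.2) * (xd * yd)))) := by
  rw [Y16_eq l hl a b _ h, Prod.mk.injEq]
  refine ⟨?_, ?_⟩ <;> field_simp
  all_goals try exact Or.inl trivial
  all_goals try ring
  all_goals (left; ring)

lemma Y16_pf (l : ℂ) (hl : l ≠ 0) (a b : ℂ × ℂ) (h : a.1 - b.2 ≠ 0)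
    (x yn : ℂ) (yd : ℂ) (hy : yd ≠ 0) :
    Y16 l a b (x, yn / yd) =
      ((l * (a.1 - b.1) * x * yd + (b.1 - b.2) * yn) / ((a.1 - b.2) * yd),
       (l * (a.1 - a.2) * x * yd + (a.2 - b.2) * yn) / (l * ((a.1 - b.2) * yd))) := by
  rw [Y16_eq l hl a b _ h, Prod.mk.injEq]
  refine ⟨?_, ?_⟩ <;> field_simp
  all_goals try exact Or.inl trivial
  all_goals try ring
  all_goals (left; ring)

lemma Y16_fp (l : ℂ) (hl : l ≠ 0) (a b : ℂ × ℂ) (h : a.1 - b.2 ≠ 0)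
    (xn y : ℂ) (xd : ℂ) (hx : xd ≠ 0) :
    Y16 l a b (xn / xd, y) =
      ((l * (a.1 - b.1) * xn + (b.1 - b.2) * y * xd) / ((a.1 - b.2) * xd),
       (l * (a.1 - a.2) * xn + (a.2 - b.2) * y * xd) / (l * ((a.1 - b.2) * xd))) := by
  rw [Y16_eq l hl a b _ h, Prod.mk.injEq]
  refine ⟨?_, ?_⟩ <;> field_simp
  all_goals try exact Or.inl trivial
  all_goals try ring
  all_goals (left; ring)

set_option maxHeartbeats 4000000 in
theorem stmt16 (l : ℂ) (hl : l ≠ 0) (a b c : ℂ × ℂ)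
    (hab : a.1 ≠ b.2) (hac : a.1 ≠ c.2) (hbc : b.1 ≠ c.2) :
    yb12 (Y16 l a b) ∘ yb13 (Y16 l a c) ∘ yb23 (Y16 l b c) =
      yb23 (Y16 l b c) ∘ yb13 (Y16 l a c) ∘ yb12 (Y16 l a b) := by
  obtain ⟨a1, a2⟩ := a
  obtain ⟨b1, b2⟩ := b
  obtain ⟨c1, c2⟩ := c
  simp only at hab hac hbc
  have h1 : a1 - b2 ≠ 0 := sub_ne_zero.mpr hab
  have h2 : a1 - c2 ≠ 0 := sub_ne_zero.mpr hac
  have h3 : b1 - c2 ≠ 0 := sub_ne_zero.mpr hbc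
  funext p
  obtain ⟨x, y, z⟩ := p
  have E1 :
      Y16 l (b1, b2) (c1, c2) (y, z) =
      ((l * (b1 - c1) * (y) + (c1 - c2) * (z)) / (b1 - c2),
       (l * (b1 - b2) * (y) + (b2 - c2) * (z)) / (l * (b1 - c2))) :=
    Y16_eq l hl (b1, b2) (c1, c2) (y, z) h3
  have E2 :
      Y16 l (a1, a2) (c1, c2) (x, (l * (b1 - b2) * (y) + (b2 - c2) * (z)) / (l * (b1 - c2))) =
      ((l * (a1 - c1) * (x) * (l * (b1 - c2)) + (c1 - c2) * ((l * (b1 - b2) * (y) + (b2 - c2) * (z)))) / ((a1 - c2) * (l * (b1 - c2))),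
       (l * (a1 - a2) * (x) * (l * (b1 - c2)) + (a2 - c2) * ((l * (b1 - b2) * (y) + (b2 - c2) * (z)))) / (l * ((a1 - c2) * (l * (b1 - c2))))) :=
    Y16_pf l hl (a1, a2) (c1, c2) h2 x (l * (b1 - b2) * (y) + (b2 - c2) * (z)) (l * (b1 - c2)) (mul_ne_zero hl h3)
  have E3 :
      Y16 l (a1, a2) (b1, b2) ((l * (a1 - c1) * (x) * (l * (b1 - c2)) + (c1 - c2) * ((l * (b1 - b2) * (y) + (b2 - c2) * (z)))) / ((a1 - c2) * (l * (b1 - c2))), (l * (b1 - c1) * (y) + (c1 - c2) * (z)) / (b1 - c2)) =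
      ((l * (a1 - b1) * ((l * (a1 - c1) * (x) * (l * (b1 - c2)) + (c1 - c2) * ((l * (b1 - b2) * (y) + (b2 - c2) * (z))))) * (b1 - c2) + (b1 - b2) * ((l * (b1 - c1) * (y) + (c1 - c2) * (z))) * ((a1 - c2) * (l * (b1 - c2)))) / ((a1 - b2) * (((a1 - c2) * (l * (b1 - c2))) * (b1 - c2))),
       (l * (a1 - a2) * ((l * (a1 - c1) * (x) * (l * (b1 - c2)) + (c1 - c2) * ((l * (b1 - b2) * (y) + (b2 - c2) * (z))))) * (b1 - c2) + (a2 - b2) * ((l * (b1 - c1) * (y) + (c1 - c2) * (z))) * ((a1 - c2) * (l * (b1 - c2)))) / (l * ((a1 - b2) * (((a1 - c2) * (l * (b1 - c2))) * (b1 - c2))))) :=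
    Y16_ff l hl (a1, a2) (b1, b2) h1 (l * (a1 - c1) * (x) * (l * (b1 - c2)) + (c1 - c2) * ((l * (b1 - b2) * (y) + (b2 - c2) * (z)))) (l * (b1 - c1) * (y) + (c1 - c2) * (z)) ((a1 - c2) * (l * (b1 - c2))) (b1 - c2) (mul_ne_zero h2 (mul_ne_zero hl h3)) h3
  have F1 :
      Y16 l (a1, a2) (b1, b2) (x, y) =
      ((l * (a1 - b1) * (x) + (b1 - b2) * (y)) / (a1 - b2),
       (l * (a1 - a2) * (x) + (a2 - b2) * (y)) / (l * (a1 - b2))) :=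
    Y16_eq l hl (a1, a2) (b1, b2) (x, y) h1
  have F2 :
      Y16 l (a1, a2) (c1, c2) ((l * (a1 - b1) * (x) + (b1 - b2) * (y)) / (a1 - b2), z) =
      ((l * (a1 - c1) * ((l * (a1 - b1) * (x) + (b1 - b2) * (y))) + (c1 - c2) * (z) * (a1 - b2)) / ((a1 - c2) * (a1 - b2)),
       (l * (a1 - a2) * ((l * (a1 - b1) * (x) + (b1 - b2) * (y))) + (a2 - c2) * (z) * (a1 - b2)) / (l * ((a1 - c2) * (a1 - b2)))) :=
    Y16_fp l hl (a1, a2) (c1, c2) h2 (l * (a1 - b1) * (x) + (b1 - b2) * (y)) z (a1 - b2) h1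
  have F3 :
      Y16 l (b1, b2) (c1, c2) ((l * (a1 - a2) * (x) + (a2 - b2) * (y)) / (l * (a1 - b2)), (l * (a1 - a2) * ((l * (a1 - b1) * (x) + (b1 - b2) * (y))) + (a2 - c2) * (z) * (a1 - b2)) / (l * ((a1 - c2) * (a1 - b2)))) =
      ((l * (b1 - c1) * ((l * (a1 - a2) * (x) + (a2 - b2) * (y))) * (l * ((a1 - c2) * (a1 - b2))) + (c1 - c2) * ((l * (a1 - a2) * ((l * (a1 - b1) * (x) + (b1 - b2) * (y))) + (a2 - c2) * (z) * (a1 - b2))) * (l * (a1 - b2))) / ((b1 - c2) * ((l * (a1 - b2)) * (l * ((a1 - c2) * (a1 - b2))))),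
       (l * (b1 - b2) * ((l * (a1 - a2) * (x) + (a2 - b2) * (y))) * (l * ((a1 - c2) * (a1 - b2))) + (b2 - c2) * ((l * (a1 - a2) * ((l * (a1 - b1) * (x) + (b1 - b2) * (y))) + (a2 - c2) * (z) * (a1 - b2))) * (l * (a1 - b2))) / (l * ((b1 - c2) * ((l * (a1 - b2)) * (l * ((a1 - c2) * (a1 - b2))))))) :=
    Y16_ff l hl (b1, b2) (c1, c2) h3 (l * (a1 - a2) * (x) + (a2 - b2) * (y)) (l * (a1 - a2) * ((l * (a1 - b1) * (x) + (b1 - b2) * (y))) + (a2 - c2) * (z) * (a1 - b2)) (l * (a1 - b2)) (l * ((a1 - c2) * (a1 - b2))) (mul_ne_zero hl h1) (mul_ne_zero hl (mul_ne_zero h2 h1))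
  simp only [Function.comp, yb12, yb13, yb23, E1, E2, E3, F1, F2, F3]
  simp only [Prod.mk.injEq]
  refine ⟨?_, ?_, ?_⟩
  · rw [div_eq_div_iff (mul_ne_zero h1 (mul_ne_zero (mul_ne_zero h2 (mul_ne_zero hl h3)) h3)) (mul_ne_zero h2 h1)]
    ring
  · rw [div_eq_div_iff (mul_ne_zero hl (mul_ne_zero h1 (mul_ne_zero (mul_ne_zero h2 (mul_ne_zero hl h3)) h3))) (mul_ne_zero h3 (mul_ne_zero (mul_ne_zero hl h1) (mul_ne_zero hl (mul_ne_zero h2 h1))))]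
    ring
  · rw [div_eq_div_iff (mul_ne_zero hl (mul_ne_zero h2 (mul_ne_zero hl h3))) (mul_ne_zero hl (mul_ne_zero h3 (mul_ne_zero (mul_ne_zero hl h1) (mul_ne_zero hl (mul_ne_zero h2 h1)))))]
    ring
end

section
/- For nonzero parameters a, b ∈ ℂ, define the linear map Y_{a,b} : ℂ² × ℂ² → ℂ² × ℂ² sending ((x₁,x₂),(y₁,y₂)) to ((u₁,u₂),(v₁,v₂)) where u₁ = (1 − b/a)x₁ + (b/a)y₁, u₂ = y₂, v₁ = x₁, and v₂ = (a/b)x₂ + (1 − a/b)y₂. Then for all nonzero a, b, c ∈ ℂ, the parametric Yang–Baxter equation Y¹²_{a,b} ∘ Y¹³_{a,c} ∘ Y²³_{b,c} = Y²³_{b,c} ∘ Y¹³_{a,c} ∘ Y¹²_{a,b} holds as an identity of maps (ℂ²)³ → (ℂ²)³. -/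
/-- The linear parametric map on `ℂ² × ℂ²` arising from the linear approximation of the
Darboux matrix refactorisation problem for the DNLS equation. -/
noncomputable def Y17 (a b : ℂ) : (ℂ × ℂ) × (ℂ × ℂ) → (ℂ × ℂ) × (ℂ × ℂ) := fun p =>
  (((1 - b / a) * p.1.1 + (b / a) * p.2.1, p.2.2),
   (p.1.1, (a / b) * p.1.2 + (1 - a / b) * p.2.2))

set_option maxHeartbeats 1000000 in
theorem stmt17 (a b c : ℂ) (ha : a ≠ 0) (hb : b ≠ 0) (hc : c ≠ 0) :
    yb12 (Y17 a b) ∘ yb13 (Y17 a c) ∘ yb23 (Y17 b c) =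
      yb23 (Y17 b c) ∘ yb13 (Y17 a c) ∘ yb12 (Y17 a b) := by
  funext p
  obtain ⟨⟨x1, x2⟩, ⟨y1, y2⟩, z1, z2⟩ := p
  simp only [Function.comp, yb12, yb13, yb23, Y17, Prod.mk.injEq]
  repeat' constructor
  all_goals first | rfl | (field_simp; ring_nf)
end

section
/- Let K be a field, n a positive integer, Ω an abelian subgroup of the general linear group GL_n(K), and l ∈ K a nonzero scalar. For a, b ∈ Ω define the linear map Y^l_{a,b} : Mat_n(K) × Mat_n(K) → Mat_n(K) × Mat_n(K) by Y^l_{a,b}(M₁, M₂) = ( l·M₁ , l⁻¹·a M₂ a⁻¹ − b M₁ a⁻¹ + M₁ b a⁻¹ ). Then for all a, b, c ∈ Ω the parametric Yang–Baxter equation Y^l¹²_{a,b} ∘ Y^l¹³_{a,c} ∘ Y^l²³_{b,c} = Y^l²³_{b,c} ∘ Y^l¹³_{a,c} ∘ Y^l¹²_{a,b} holds as an identity of maps (Mat_n(K))³ → (Mat_n(K))³. -/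
/-! The second components agree because the scalars `l` and `l⁻¹` commute. The third components
are polynomials in `l⁻¹` whose coefficients agree separately: in degree `2` because
conjugations by commuting units commute, in degree `1` because conjugation by `a` commutes with
`⁅c, ·⁆`, and in degree `0` by the Jacobi identity, which makes `⁅b, ·⁆` and `⁅c, ·⁆` commute
as `⁅b, c⁆ = 0`. -/

section

variable {R : Type*} [Ring R]

namespace Ring

lemma lie_sub (c x y : R) : ⁅c, x - y⁆ = ⁅c, x⁆ - ⁅c, y⁆ := by
  simp only [lie_def, mul_sub, sub_mul]
  exact sub_sub_sub_comm ..

lemma lie_smul {K : Type*} [CommSemiring K] [Algebra K R] (c : R) (l : K) (x : R) :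
    ⁅c, l • x⁆ = l • ⁅c, x⁆ := by
  rw [lie_def, lie_def, mul_smul_comm, smul_mul_assoc, smul_sub]

lemma lie_mul_of_commute {c u : R} (h : Commute c u) (m : R) : ⁅c, m * u⁆ = ⁅c, m⁆ * u := by
  simp only [lie_def, sub_mul, mul_assoc, h.eq]

lemma lie_mul_left_of_commute {c u : R} (h : Commute c u) (m : R) :
    ⁅c, u * m⁆ = u * ⁅c, m⁆ := by
  simp only [lie_def, mul_sub, ← mul_assoc, h.eq]

lemma lie_lie_comm_of_commute {b c : R} (h : Commute b c) (x : R) :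
    ⁅b, ⁅c, x⁆⁆ = ⁅c, ⁅b, x⁆⁆ := by
  simp only [lie_def, mul_sub, sub_mul, ← mul_assoc, h.eq]
  rw [mul_assoc x b c, h.eq, ← mul_assoc]
  abel

end Ring

namespace Units

lemma conj_conj_comm {a b : Rˣ} (h : Commute a b) (z : R) :
    a * (b * z * ↑b⁻¹) * ↑a⁻¹ = b * (a * z * ↑a⁻¹) * ↑b⁻¹ :=
  calc a * (b * z * ↑b⁻¹) * ↑a⁻¹ = ↑(a * b) * z * ↑(a * b)⁻¹ := by
        simp only [mul_inv_rev, val_mul, mul_assoc]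
    _ = ↑(b * a) * z * ↑(b * a)⁻¹ := by rw [h.eq]
    _ = b * (a * z * ↑a⁻¹) * ↑b⁻¹ := by simp only [mul_inv_rev, val_mul, mul_assoc]

lemma lie_conj_of_commute {a : Rˣ} {c : R} (h : Commute c a) (y : R) :
    ⁅c, a * y * ↑a⁻¹⁆ = a * ⁅c, y⁆ * ↑a⁻¹ := by
  rw [Ring.lie_mul_of_commute h.units_inv_right, Ring.lie_mul_left_of_commute h]

end Units

variable {K : Type*} [Field K] [Algebra K R]

def yangBaxterMap (l : K) (a b : Rˣ) (p : R × R) : R × R :=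
  (l • p.1, l⁻¹ • ((a : R) * p.2 * ↑a⁻¹) - b * p.1 * ↑a⁻¹ + p.1 * b * ↑a⁻¹)

@[simp] lemma yangBaxterMap_fst (l : K) (a b : Rˣ) (p : R × R) :
    (yangBaxterMap l a b p).1 = l • p.1 := rfl

@[simp] lemma yangBaxterMap_snd (l : K) (a b : Rˣ) (p : R × R) :
    (yangBaxterMap l a b p).2 = l⁻¹ • ((a : R) * p.2 * ↑a⁻¹) - ⁅(b : R), p.1⁆ * ↑a⁻¹ := by
  rw [Ring.lie_def, sub_mul]
  exact sub_add ..

theorem yangBaxterMap_braid {l : K} (hl : l ≠ 0) {a b c : Rˣ} (hab : Commute a b)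
    (hac : Commute a c) (hbc : Commute b c) :
    yb12 (yangBaxterMap l a b) ∘ yb13 (yangBaxterMap l a c) ∘ yb23 (yangBaxterMap l b c)
      = yb23 (yangBaxterMap l b c) ∘ yb13 (yangBaxterMap l a c) ∘ yb12 (yangBaxterMap l a b) := by
  funext ⟨x, y, z⟩
  simp only [yb12, yb13, yb23, Function.comp_apply, Prod.mk.injEq, yangBaxterMap_fst,
    yangBaxterMap_snd]
  refine ⟨trivial, ?_, ?_⟩
  · simp only [Ring.lie_smul, smul_sub, mul_smul_comm, smul_mul_assoc, smul_smul]
    rw [mul_comm]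
  · have hab' := Commute.units_val hab
    have hca' := (Commute.units_val hac).symm
    have hconj : (a : R) * (⁅(c : R), y⁆ * ↑b⁻¹) * ↑a⁻¹ = ⁅(c : R), a * y * ↑a⁻¹⁆ * ↑b⁻¹ := by
      rw [Units.lie_conj_of_commute hca']
      simp only [mul_assoc, hab'.symm.units_inv_left.units_inv_right.eq]
    have hjacobi : (b : R) * (⁅(c : R), x⁆ * ↑a⁻¹) * ↑b⁻¹
        - ⁅(c : R), ⁅(b : R), x⁆ * ↑a⁻¹⁆ * ↑b⁻¹ = ⁅(c : R), x⁆ * ↑a⁻¹ := by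
      have hb : (b : R) * (↑a⁻¹ * ↑b⁻¹) = ↑a⁻¹ := by
        rw [← mul_assoc, hab'.symm.units_inv_right.eq, mul_assoc, Units.mul_inv, mul_one]
      rw [Ring.lie_mul_of_commute hca'.units_inv_right,
        ← Ring.lie_lie_comm_of_commute (Commute.units_val hbc), Ring.lie_def _ ⁅_, _⁆]
      simp only [sub_mul, mul_assoc, hb, sub_sub_cancel]
    simp only [Ring.lie_sub, Ring.lie_smul, mul_sub, sub_mul, smul_sub, mul_smul_comm,
      smul_mul_assoc, smul_smul]
    rw [Units.conj_conj_comm hab, hconj, inv_mul_cancel₀ hl, one_smul]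
    linear_combination (norm := module) hjacobi

theorem isParamYB_yangBaxterMap {Ω : Type*} (u : Ω → Rˣ) (hu : ∀ a b, Commute (u a) (u b))
    {l : K} (hl : l ≠ 0) : IsParamYB fun a b => yangBaxterMap l (u a) (u b) :=
  fun a b c => yangBaxterMap_braid hl (hu a b) (hu a c) (hu b c)

end

theorem stmt19_general {K : Type*} [Field K] {n : ℕ}
    (Ω : Subgroup (Matrix.GeneralLinearGroup (Fin n) K))
    (hcomm : ∀ x y : Ω,
      (x : Matrix.GeneralLinearGroup (Fin n) K) * (y : Matrix.GeneralLinearGroup (Fin n) K)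
        = (y : Matrix.GeneralLinearGroup (Fin n) K) * (x : Matrix.GeneralLinearGroup (Fin n) K))
    (l : K) (hl : l ≠ 0) :
    IsParamYB (fun (a b : Ω)
        (p : Matrix (Fin n) (Fin n) K × Matrix (Fin n) (Fin n) K) =>
      (l • p.1,
       l⁻¹ • (((a : Matrix.GeneralLinearGroup (Fin n) K) : Matrix (Fin n) (Fin n) K) * p.2 *
           (((a : Matrix.GeneralLinearGroup (Fin n) K)⁻¹ :
              Matrix.GeneralLinearGroup (Fin n) K) : Matrix (Fin n) (Fin n) K))
         - ((b : Matrix.GeneralLinearGroup (Fin n) K) : Matrix (Fin n) (Fin n) K) * p.1 *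
           (((a : Matrix.GeneralLinearGroup (Fin n) K)⁻¹ :
              Matrix.GeneralLinearGroup (Fin n) K) : Matrix (Fin n) (Fin n) K)
         + p.1 * ((b : Matrix.GeneralLinearGroup (Fin n) K) : Matrix (Fin n) (Fin n) K) *
           (((a : Matrix.GeneralLinearGroup (Fin n) K)⁻¹ :
              Matrix.GeneralLinearGroup (Fin n) K) : Matrix (Fin n) (Fin n) K))) :=
  isParamYB_yangBaxterMap (fun a : Ω => (a : Matrix.GeneralLinearGroup (Fin n) K)) hcomm hl

theorem stmt19 {K : Type*} [Field K] {n : ℕ} (hn : 0 < n)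
    (Ω : Subgroup (Matrix.GeneralLinearGroup (Fin n) K))
    (hcomm : ∀ x y : Ω,
      (x : Matrix.GeneralLinearGroup (Fin n) K) * (y : Matrix.GeneralLinearGroup (Fin n) K)
        = (y : Matrix.GeneralLinearGroup (Fin n) K) * (x : Matrix.GeneralLinearGroup (Fin n) K))
    (l : K) (hl : l ≠ 0) :
    IsParamYB (fun (a b : Ω)
        (p : Matrix (Fin n) (Fin n) K × Matrix (Fin n) (Fin n) K) =>
      (l • p.1,
       l⁻¹ • (((a : Matrix.GeneralLinearGroup (Fin n) K) : Matrix (Fin n) (Fin n) K) * p.2 *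
           (((a : Matrix.GeneralLinearGroup (Fin n) K)⁻¹ :
              Matrix.GeneralLinearGroup (Fin n) K) : Matrix (Fin n) (Fin n) K))
         - ((b : Matrix.GeneralLinearGroup (Fin n) K) : Matrix (Fin n) (Fin n) K) * p.1 *
           (((a : Matrix.GeneralLinearGroup (Fin n) K)⁻¹ :
              Matrix.GeneralLinearGroup (Fin n) K) : Matrix (Fin n) (Fin n) K)
         + p.1 * ((b : Matrix.GeneralLinearGroup (Fin n) K) : Matrix (Fin n) (Fin n) K) *
           (((a : Matrix.GeneralLinearGroup (Fin n) K)⁻¹ :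
              Matrix.GeneralLinearGroup (Fin n) K) : Matrix (Fin n) (Fin n) K))) :=
  stmt19_general Ω hcomm l hl
end
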